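/- Let (X, τ) be a T_d topological space with derived-set operator d, and let τ⁺ be its derivative topology. For any subset U ⊆ X and point x ∈ X, U contains a τ⁺-neighborhood of x (i.e., there is a τ⁺-open set V with x ∈ V ⊆ U) if and only if one of the following holds: (i) x is not doubly d-reflexive and x ∈ U; (ii) x is doubly d-reflexive and there exist a τ-open set A and a set B ⊆ X such that x ∈ A ∩ d(B) and A ∩ d(B) ⊆ U. -/

import Mathlib

/-- The derivative topology `τ⁺` of a topology `t`: the topology generated by
the `t`-open sets together with all derived sets `d_t(A)`, `A ⊆ X`. -/
def derivTopology {X : Type*} (t : TopologicalSpace X) : TopologicalSpace X :=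
  TopologicalSpace.generateFrom
    ({U : Set X | @IsOpen X t U} ∪ {S : Set X | ∃ A : Set X, S = @derivedSet X t A})

/-- A point `x` is doubly d-reflexive if `x ∈ d(X)` and for all `A`, `B`,
`x ∈ d(A) ∩ d(B)` implies `x ∈ d(d(A) ∩ d(B))`. -/
def DoublyDReflexive {X : Type*} [TopologicalSpace X] (x : X) : Prop :=
  x ∈ derivedSet (Set.univ : Set X) ∧
    ∀ A B : Set X, x ∈ derivedSet A ∩ derivedSet B →
      x ∈ derivedSet (derivedSet A ∩ derivedSet B)

/-!
If `x` is not doubly d-reflexive, it is isolated in `X` or in some `d(A) ∩ d(B)`, and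
either way `{x}` is `τ⁺`-open. If `x` is doubly d-reflexive, the `T_d` property gives
`d(d(A) ∩ d(B)) ⊆ d(A) ∩ d(B)`, so the derived sets containing `x` are directed downwards
and the sets `A ∩ d(B)` form a `τ⁺`-neighbourhood basis of `x`.
-/

open Set Topology

section DerivTopology

variable {X : Type*} [t : TopologicalSpace X]

lemma isOpen_derivTopology_of_isOpen {U : Set X} (hU : IsOpen U) :
    IsOpen[derivTopology t] U :=
  TopologicalSpace.isOpen_generateFrom_of_mem (Or.inl hU)

lemma isOpen_derivTopology_derivedSet (A : Set X) : IsOpen[derivTopology t] (derivedSet A) :=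
  TopologicalSpace.isOpen_generateFrom_of_mem (Or.inr ⟨A, rfl⟩)

lemma isOpen_derivTopology_singleton_of_notMem_derivedSet {S : Set X} {x : X}
    (hS : IsOpen[derivTopology t] S) (hxS : x ∈ S) (hx : x ∉ derivedSet S) :
    IsOpen[derivTopology t] {x} := by
  rw [mem_derivedSet, accPt_iff_nhds] at hx
  push Not at hx
  obtain ⟨W, hW, hWS⟩ := hx
  have hsingleton : interior W ∩ S = {x} :=
    Subset.antisymm (fun y hy => hWS y ⟨interior_subset hy.1, hy.2⟩)
      (singleton_subset_iff.2 ⟨mem_interior_iff_mem_nhds.2 hW, hxS⟩)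
  rw [← hsingleton]
  exact (derivTopology t).isOpen_inter _ _ (isOpen_derivTopology_of_isOpen isOpen_interior) hS

lemma isOpen_derivTopology_singleton_of_not_doublyDReflexive {x : X}
    (hx : ¬ DoublyDReflexive x) : IsOpen[derivTopology t] {x} := by
  rw [DoublyDReflexive, not_and_or] at hx
  push Not at hx
  rcases hx with hx | ⟨A, B, hxAB, hx⟩
  · exact isOpen_derivTopology_singleton_of_notMem_derivedSet
      (isOpen_derivTopology_of_isOpen isOpen_univ) (mem_univ x) hx
  · exact isOpen_derivTopology_singleton_of_notMem_derivedSet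
      ((derivTopology t).isOpen_inter _ _ (isOpen_derivTopology_derivedSet A)
        (isOpen_derivTopology_derivedSet B)) hxAB hx

lemma DoublyDReflexive.exists_derivedSet_subset_inter
    (hTd : ∀ A : Set X, IsClosed (derivedSet A)) {x : X} (hx : DoublyDReflexive x)
    {B₁ B₂ : Set X} (h₁ : x ∈ derivedSet B₁) (h₂ : x ∈ derivedSet B₂) :
    ∃ B, x ∈ derivedSet B ∧ derivedSet B ⊆ derivedSet B₁ ∩ derivedSet B₂ := by
  have hdd (C : Set X) : derivedSet (derivedSet C) ⊆ derivedSet C :=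
    (isClosed_iff_derivedSet_subset _).1 (hTd C)
  refine ⟨derivedSet B₁ ∩ derivedSet B₂, hx.2 B₁ B₂ ⟨h₁, h₂⟩, fun y hy => ⟨?_, ?_⟩⟩
  · exact hdd B₁ (derivedSet_mono _ _ inter_subset_left hy)
  · exact hdd B₂ (derivedSet_mono _ _ inter_subset_right hy)

lemma DoublyDReflexive.exists_isOpen_inter_derivedSet_subset
    (hTd : ∀ A : Set X, IsClosed (derivedSet A)) {x : X} (hx : DoublyDReflexive x)
    {V : Set X} (hV : IsOpen[derivTopology t] V) (hxV : x ∈ V) :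
    ∃ A B : Set X, IsOpen A ∧ x ∈ A ∩ derivedSet B ∧ A ∩ derivedSet B ⊆ V := by
  induction hV with
  | basic V hV =>
    rcases hV with hV | ⟨C, rfl⟩
    · exact ⟨V, univ, hV, ⟨hxV, hx.1⟩, inter_subset_left⟩
    · exact ⟨univ, C, isOpen_univ, ⟨mem_univ x, hxV⟩, inter_subset_right⟩
  | univ => exact ⟨univ, univ, isOpen_univ, ⟨mem_univ x, hx.1⟩, subset_univ _⟩
  | inter V₁ V₂ _ _ ih₁ ih₂ =>
    obtain ⟨A₁, B₁, hA₁, ⟨hxA₁, hxB₁⟩, hV₁⟩ := ih₁ hxV.1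
    obtain ⟨A₂, B₂, hA₂, ⟨hxA₂, hxB₂⟩, hV₂⟩ := ih₂ hxV.2
    obtain ⟨B, hxB, hB⟩ := hx.exists_derivedSet_subset_inter hTd hxB₁ hxB₂
    refine ⟨A₁ ∩ A₂, B, hA₁.inter hA₂, ⟨⟨hxA₁, hxA₂⟩, hxB⟩, fun y hy => ⟨?_, ?_⟩⟩
    · exact hV₁ ⟨hy.1.1, (hB hy.2).1⟩
    · exact hV₂ ⟨hy.1.2, (hB hy.2).2⟩
  | sUnion 𝒱 _ ih =>
    obtain ⟨V, hV𝒱, hxV⟩ := hxV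
    obtain ⟨A, B, hA, hxAB, hABV⟩ := ih V hV𝒱 hxV
    exact ⟨A, B, hA, hxAB, hABV.trans (subset_sUnion_of_mem hV𝒱)⟩

end DerivTopology

/-- In a `T_d`-space `(X, t)`, a set `U` contains a
`t⁺`-neighborhood of `x` iff either (i) `x` is not doubly d-reflexive and
`x ∈ U`, or (ii) `x` is doubly d-reflexive and there are a `t`-open `A` and a
set `B` with `x ∈ A ∩ d(B) ⊆ U`. -/
theorem derivTopology_nhds_characterization {X : Type*} [t : TopologicalSpace X]
    (hTd : ∀ A : Set X, IsClosed (derivedSet A)) (U : Set X) (x : X) :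
    (∃ V : Set X, @IsOpen X (derivTopology t) V ∧ x ∈ V ∧ V ⊆ U) ↔
      ((¬ DoublyDReflexive x ∧ x ∈ U) ∨
        (DoublyDReflexive x ∧ ∃ A B : Set X, IsOpen A ∧
          x ∈ A ∩ derivedSet B ∧ A ∩ derivedSet B ⊆ U)) := by
  constructor
  · rintro ⟨V, hV, hxV, hVU⟩
    by_cases hx : DoublyDReflexive x
    · obtain ⟨A, B, hA, hxAB, hABV⟩ := hx.exists_isOpen_inter_derivedSet_subset hTd hV hxV
      exact Or.inr ⟨hx, A, B, hA, hxAB, hABV.trans hVU⟩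
    · exact Or.inl ⟨hx, hVU hxV⟩
  · rintro (⟨hx, hxU⟩ | ⟨-, A, B, hA, hxAB, hABU⟩)
    · exact ⟨{x}, isOpen_derivTopology_singleton_of_not_doublyDReflexive hx, rfl,
        singleton_subset_iff.2 hxU⟩
    · exact ⟨A ∩ derivedSet B,
        (derivTopology t).isOpen_inter _ _ (isOpen_derivTopology_of_isOpen hA)
          (isOpen_derivTopology_derivedSet B), hxAB, hABU⟩
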